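/- Let B be the Banach space of bounded functions X → ℝ with the sup norm. Fix a compact set A, nonnegative coefficients l^α_{j,i} ≥ 0 with Σ_i l^α_{j,i} = M/k² for each j and α, bounded coefficients c^α_j with sup |c^{α,+}| =: C_c, a parameter θ ∈ [0,1], and data F^α_j, U^{prev} ∈ B. Define for ε > 0 the map T : B → B by (TU)_j = U_j - ε·sup_α { (1 + θΔt(M/k² - c^α_j))U_j - θΔt Σ_{i≠j} l^α_{j,i}U_i - F^α_j(U^{prev}) }. If ε is small enough that 1 - ε(1 + θΔt(M/k² - c^α_j)) ≥ 0 for all j, α, and εΔtθC_c < ε, then T is a contraction on B with Lipschitz constant 1 - ε(1 - ΔtθC_c), provided ΔtθC_c < 1. -/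

import Mathlib

/-! For each control `α` the bracket is affine in `U`, and `U ↦ U_j - ε · bracket` has
coefficient `1 - ε(1 + θΔt(M/k² - c^α_j)) ≥ 0` on `U_j` and `εθΔt l^α_{j,i} ≥ 0` on `U_i`,
`i ≠ j`. These sum to at most `1 - ε + εθΔt c^α_j ≤ 1 - ε(1 - ΔtθC_c)`, so each branch is
Lipschitz with that constant, and taking the supremum over `α` preserves the bound. -/

open Set

/-- Without summability of `a` and `b` the junk values `∑' = 0` still satisfy the bound,
because `∑' w ≥ 0`. -/
theorem tsum_sub_tsum_le_of_abs_sub_le {ι : Type*} {a b w : ι → ℝ} (hw : Summable w)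
    (h : ∀ i, |a i - b i| ≤ w i) : ∑' i, a i - ∑' i, b i ≤ ∑' i, w i := by
  have hab : Summable fun i => a i - b i := .of_norm_bounded hw h
  have hab_le : ∑' i, (a i - b i) ≤ ∑' i, w i :=
    hab.tsum_le_tsum (fun i => (le_abs_self _).trans (h i)) hw
  by_cases ha : Summable a
  · have hb : Summable b := (ha.sub hab).congr fun i => sub_sub_cancel _ _
    rwa [← ha.tsum_sub hb]
  · have hb : ¬ Summable b := fun hb => ha <| (hb.add hab).congr fun i => add_sub_cancel _ _
    rw [tsum_eq_zero_of_not_summable ha, tsum_eq_zero_of_not_summable hb, sub_zero]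
    exact tsum_nonneg fun i => (abs_nonneg _).trans (h i)

theorem sub_mul_ciSup_sub_sub_mul_ciSup_le {A : Type*} [Nonempty A] {f g : A → ℝ}
    {u v ε C : ℝ} (hf : BddAbove (range f)) (hε : 0 ≤ ε)
    (h : ∀ α, (u - ε * f α) - (v - ε * g α) ≤ C) :
    (u - ε * iSup f) - (v - ε * iSup g) ≤ C := by
  have : ε * iSup g ≤ ε * iSup f + (C - u + v) := by
    rw [Real.mul_iSup_of_nonneg hε]
    refine ciSup_le fun α => ?_
    have := mul_le_mul_of_nonneg_left (le_ciSup hf α) hε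
    linarith [h α]
  linarith

theorem SL_map_sub_le
    {X A : Type*} [Nonempty A] [DecidableEq X]
    (l : A → X → X → ℝ) (c : A → X → ℝ) (F : A → X → ℝ)
    (θ Δt k M Cc ε : ℝ)
    (hθ0 : 0 ≤ θ) (hΔt : 0 ≤ Δt)
    (hl : ∀ α j i, 0 ≤ l α j i) (hlsum : ∀ α j, Summable (l α j))
    (hrow : ∀ α j, (∑' i, l α j i) = M / k ^ 2)
    (hc : ∀ α j, max (c α j) 0 ≤ Cc)
    (hε : 0 ≤ ε)
    (hsmall : ∀ α j, 0 ≤ 1 - ε * (1 + θ * Δt * (M / k ^ 2 - c α j)))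
    (T : (X → ℝ) → X → ℝ)
    (hT : ∀ U j, T U j = U j - ε *
      ⨆ α, ((1 + θ * Δt * (M / k ^ 2 - c α j)) * U j
        - θ * Δt * (∑' i, if i = j then 0 else l α j i * U i) - F α j))
    (U V : X → ℝ) (D : ℝ) (hD : ∀ i, |U i - V i| ≤ D) (j : X)
    (hU : BddAbove (range fun α =>
        (1 + θ * Δt * (M / k ^ 2 - c α j)) * U j
          - θ * Δt * (∑' i, if i = j then 0 else l α j i * U i) - F α j)) :
    T U j - T V j ≤ (1 - ε * (1 - Δt * θ * Cc)) * D := by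
  have hD0 : 0 ≤ D := (abs_nonneg _).trans (hD j)
  rw [hT, hT]
  refine sub_mul_ciSup_sub_sub_mul_ciSup_le hU hε fun α => ?_
  have hoff : (∑' i, if i = j then 0 else l α j i * U i)
      - (∑' i, if i = j then 0 else l α j i * V i) ≤ M / k ^ 2 * D := by
    calc _ ≤ ∑' i, l α j i * D :=
          tsum_sub_tsum_le_of_abs_sub_le ((hlsum α j).mul_right D) fun i => by
            split_ifs
            · simpa using mul_nonneg (hl α j i) hD0
            · rw [← mul_sub, abs_mul, abs_of_nonneg (hl α j i)]
              exact mul_le_mul_of_nonneg_left (hD i) (hl α j i)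
      _ = M / k ^ 2 * D := by rw [tsum_mul_right, hrow]
  have hcC : c α j ≤ Cc := (le_max_left _ _).trans (hc α j)
  calc _ = (1 - ε * (1 + θ * Δt * (M / k ^ 2 - c α j))) * (U j - V j)
          + ε * (θ * Δt) * ((∑' i, if i = j then 0 else l α j i * U i)
            - (∑' i, if i = j then 0 else l α j i * V i)) := by ring
    _ ≤ (1 - ε * (1 + θ * Δt * (M / k ^ 2 - c α j))) * D + ε * (θ * Δt) * (M / k ^ 2 * D) := by
          gcongr
          · exact hsmall α j
          · exact (le_abs_self _).trans (hD j)
    _ = (1 - ε * (1 - Δt * θ * c α j)) * D := by ring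
    _ ≤ (1 - ε * (1 - Δt * θ * Cc)) * D := by gcongr

theorem SL_fixed_point_contraction_general
    {X A : Type*} [Nonempty A] [DecidableEq X]
    (l : A → X → X → ℝ) (c : A → X → ℝ) (F : A → X → ℝ)
    (θ Δt k M Cc ε : ℝ)
    (hθ0 : 0 ≤ θ) (hΔt : 0 < Δt)
    (hl : ∀ α j i, 0 ≤ l α j i) (hlsum : ∀ α j, Summable (l α j))
    (hrow : ∀ α j, (∑' i, l α j i) = M / k ^ 2)
    (hc : ∀ α j, max (c α j) 0 ≤ Cc)
    (hε : 0 < ε)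
    (hsmall : ∀ α j, 0 ≤ 1 - ε * (1 + θ * Δt * (M / k ^ 2 - c α j)))
    (T : (X → ℝ) → X → ℝ)
    (hT : ∀ U j, T U j = U j - ε *
      ⨆ α, ((1 + θ * Δt * (M / k ^ 2 - c α j)) * U j
        - θ * Δt * (∑' i, if i = j then 0 else l α j i * U i) - F α j)) :
    ∀ U V : X → ℝ,
      BddAbove (Set.range fun i => |U i - V i|) →
      (∀ j, BddAbove (Set.range fun α =>
        (1 + θ * Δt * (M / k ^ 2 - c α j)) * U j
          - θ * Δt * (∑' i, if i = j then 0 else l α j i * U i) - F α j)) →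
      (∀ j, BddAbove (Set.range fun α =>
        (1 + θ * Δt * (M / k ^ 2 - c α j)) * V j
          - θ * Δt * (∑' i, if i = j then 0 else l α j i * V i) - F α j)) →
      ∀ j, |T U j - T V j| ≤ (1 - ε * (1 - Δt * θ * Cc)) * ⨆ i, |U i - V i| := by
  intro U V hUV hU hV j
  have hD : ∀ i, |U i - V i| ≤ ⨆ i, |U i - V i| := le_ciSup hUV
  have key := SL_map_sub_le l c F θ Δt k M Cc ε hθ0 hΔt.le hl hlsum hrow hc hε.le hsmall T hT
  rw [abs_sub_le_iff]
  exact ⟨key U V _ hD j (hU j), key V U _ (fun i => abs_sub_comm (V i) (U i) ▸ hD i) j (hV j)⟩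

/-- The fixed-point map `T` of the implicit SL scheme is a contraction on the
space of bounded functions, with Lipschitz constant `1 - ε(1 - Δt θ C_c)`. -/
theorem SL_fixed_point_contraction
    {X A : Type*} [Nonempty X] [Nonempty A] [DecidableEq X]
    (l : A → X → X → ℝ) (c : A → X → ℝ) (F : A → X → ℝ)
    (θ Δt k M Cc ε : ℝ)
    (hθ0 : 0 ≤ θ) (hθ1 : θ ≤ 1) (hΔt : 0 < Δt) (hk : 0 < k) (hM : 1 ≤ M)
    (hl : ∀ α j i, 0 ≤ l α j i) (hlsum : ∀ α j, Summable (l α j))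
    (hrow : ∀ α j, (∑' i, l α j i) = M / k ^ 2)
    (hCc : 0 ≤ Cc) (hc : ∀ α j, max (c α j) 0 ≤ Cc)
    (hε : 0 < ε)
    (hsmall : ∀ α j, 0 ≤ 1 - ε * (1 + θ * Δt * (M / k ^ 2 - c α j)))
    (hCFL : Δt * θ * Cc < 1)
    (T : (X → ℝ) → X → ℝ)
    (hT : ∀ U j, T U j = U j - ε *
      ⨆ α, ((1 + θ * Δt * (M / k ^ 2 - c α j)) * U j
        - θ * Δt * (∑' i, if i = j then 0 else l α j i * U i) - F α j)) :
    ∀ U V : X → ℝ,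
      BddAbove (Set.range fun i => |U i - V i|) →
      (∀ j, BddAbove (Set.range fun α =>
        (1 + θ * Δt * (M / k ^ 2 - c α j)) * U j
          - θ * Δt * (∑' i, if i = j then 0 else l α j i * U i) - F α j)) →
      (∀ j, BddAbove (Set.range fun α =>
        (1 + θ * Δt * (M / k ^ 2 - c α j)) * V j
          - θ * Δt * (∑' i, if i = j then 0 else l α j i * V i) - F α j)) →
      ∀ j, |T U j - T V j| ≤ (1 - ε * (1 - Δt * θ * Cc)) * ⨆ i, |U i - V i| :=
  SL_fixed_point_contraction_general l c F θ Δt k M Cc ε hθ0 hΔt hl hlsum hrow hc hε hsmall T hT
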